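/- arXiv:2111.07481 — 4 statements merged into one kernel-verified Lean document; each statement's English description precedes it below -/
import Mathlib

section
/- In any greedy run on a 2NC-TAP instance, for each non-leaf node u of T the assigned weights are nondecreasing along the order of assignment, i.e., wgt(𝒫̂^1_u) ≤ wgt(𝒫̂^2_u) ≤ … ≤ wgt(𝒫̂^{ν(u)−1}_u); equivalently, y(𝒫) ≥ 0 for every non-leaf node u and every partition 𝒫 ∈ Ptn⊇(comps(T−u)). -/
/-!
When `ℓ_i` is picked, every later pick `ℓ_{i'}` was also a candidate, so the greedy ratio of
`ℓ_i` is at most `cost(ℓ_{i'}) / |inc^i(ℓ_{i'})|`. Coverage only shrinks as links are added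
(components of `(T ∪ F) − u` only merge), so this is at most the greedy ratio of `ℓ_{i'}`.
Hence the ratios of the picked links are nondecreasing along the run; the weights assigned to
a fixed `u` are a subsequence of them, and they are nonnegative because costs are.
-/

open scoped Classical
open Finset

namespace TwoNCTAP

variable {V : Type*}

/-- The graph `H` with the vertex `u` "deleted": all edges incident to `u` are removed,
so that `u` becomes an isolated vertex. -/
def delVert (H : SimpleGraph V) (u : V) : SimpleGraph V where
  Adj a b := H.Adj a b ∧ a ≠ u ∧ b ≠ u
  symm := ⟨by rintro a b ⟨h, ha, hb⟩; exact ⟨h.symm, hb, ha⟩⟩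
  loopless := ⟨by rintro a ⟨h, -, -⟩; exact H.irrefl h⟩

/-- The partition of `V ∖ {u}` into the vertex sets of the connected components of `H − u`. -/
def compPartition (H : SimpleGraph V) (u : V) : Set (Set V) :=
  {S | ∃ v, v ≠ u ∧ S = {w | (delVert H u).Reachable v w}}

/-- `P` is a partition of the set `S`. -/
def IsPartitionOf (P : Set (Set V)) (S : Set V) : Prop :=
  (∀ B ∈ P, B.Nonempty) ∧ (∀ B ∈ P, B ⊆ S) ∧ ∀ v ∈ S, ∃! B : Set V, B ∈ P ∧ v ∈ B

/-- `P ∈ Ptn⊇(comps(T−u))`: `P` is a partition of `V ∖ {u}` each of whose blocks is a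
union of vertex sets of connected components of `T − u`. -/
def PtnSup (T : SimpleGraph V) (u : V) (P : Set (Set V)) : Prop :=
  IsPartitionOf P {v | v ≠ u} ∧ ∀ B ∈ compPartition T u, ∃ C ∈ P, B ⊆ C

/-- An edge `e` crosses the partition `P` if its two endpoints lie in different blocks of `P`. -/
def Crosses (P : Set (Set V)) (e : Sym2 V) : Prop :=
  ∃ v w, e = s(v, w) ∧ ∃ B ∈ P, ∃ C ∈ P, B ≠ C ∧ v ∈ B ∧ w ∈ C

/-- `u` is a non-leaf node of `T`. -/
def NonLeaf (T : SimpleGraph V) (u : V) : Prop := 1 < (T.neighborSet u).ncard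

/-- The links of the instance: the edges of `G` that are not edges of the tree `T`. -/
def links (G T : SimpleGraph V) : Set (Sym2 V) := G.edgeSet \ T.edgeSet

variable [Fintype V]

/-- Feasibility for the partition LP (P) of the 2NC-TAP instance `(G, T, cost)`. -/
def FeasibleP (G T : SimpleGraph V) (x : Sym2 V → ℝ) : Prop :=
  (∀ ℓ ∈ links G T, 0 ≤ x ℓ) ∧
  ∀ u : V, NonLeaf T u → ∀ P : Set (Set V), PtnSup T u P →
    (P.ncard : ℝ) - 1 ≤
      ∑ ℓ ∈ Finset.univ.filter (fun ℓ : Sym2 V => ℓ ∈ links G T ∧ Crosses P ℓ), x ℓ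


/-- The tree `T` together with a set `F` of links added as edges. -/
def withLinks (T : SimpleGraph V) (F : Set (Sym2 V)) : SimpleGraph V :=
  T ⊔ SimpleGraph.fromEdgeSet F

/-- The current partition `𝒫^i_u` (0-indexed): the partition of `V ∖ {u}` into the vertex
sets of the connected components of `(T ∪ {ℓ_0, …, ℓ_{i−1}}) − u`. -/
def curPtn {m : ℕ} (T : SimpleGraph V) (ℓseq : Fin m → Sym2 V) (i : ℕ) (u : V) :
    Set (Set V) :=
  compPartition (withLinks T {e | ∃ j : Fin m, (j : ℕ) < i ∧ ℓseq j = e}) u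

/-- `inc^i(e)`: the set of non-leaf nodes `u` of `T` whose current partition (at the start
of iteration `i`, 0-indexed) is crossed by the link `e`. -/
def incSet {m : ℕ} (T : SimpleGraph V) (ℓseq : Fin m → Sym2 V) (i : ℕ)
    (e : Sym2 V) : Set V :=
  {u | NonLeaf T u ∧ Crosses (curPtn T ℓseq i u) e}

/-- A greedy run on the 2NC-TAP instance `(G, T, cost)`: a sequence of distinct links
`ℓ_0, …, ℓ_{m−1}` such that each `ℓ_i` minimizes the cost-coverage ratio at iteration `i`,
and at the end every current partition is trivial (i.e. `T` plus the picked links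
is 2-node-connected). -/
def IsGreedyRun (G T : SimpleGraph V) (cost : Sym2 V → ℝ) (m : ℕ)
    (ℓseq : Fin m → Sym2 V) : Prop :=
  Function.Injective ℓseq ∧
  (∀ i, ℓseq i ∈ links G T) ∧
  (∀ i : Fin m,
    (incSet T ℓseq (i : ℕ) (ℓseq i)).Nonempty ∧
    ∀ e ∈ links G T, (incSet T ℓseq (i : ℕ) e).Nonempty →
      cost (ℓseq i) / ((incSet T ℓseq (i : ℕ) (ℓseq i)).ncard : ℝ)
        ≤ cost e / ((incSet T ℓseq (i : ℕ) e).ncard : ℝ)) ∧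
  ∀ u : V, NonLeaf T u → curPtn T ℓseq m u = {{v | v ≠ u}}

/-- `ν(u)`: the number of connected components of `T − u`. -/
noncomputable def nblocks (T : SimpleGraph V) (u : V) : ℕ := (compPartition T u).ncard

end TwoNCTAP

namespace TwoNCTAP

variable {V : Type*}

lemma ne_of_reachable_delVert {H : SimpleGraph V} {u a x : V}
    (h : (delVert H u).Reachable a x) (ha : a ≠ u) : x ≠ u := by
  obtain ⟨p⟩ := h
  induction p with
  | nil => exact ha
  | cons hadj _ ih => exact ih hadj.2.2

lemma crosses_compPartition_iff (H : SimpleGraph V) (u : V) (e : Sym2 V) :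
    Crosses (compPartition H u) e ↔
      ∃ v w, e = s(v, w) ∧ v ≠ u ∧ w ≠ u ∧ ¬ (delVert H u).Reachable v w := by
  constructor
  · rintro ⟨v, w, he, B, ⟨a, ha, rfl⟩, C, ⟨b, hb, rfl⟩, hBC, hv, hw⟩
    refine ⟨v, w, he, ne_of_reachable_delVert hv ha, ne_of_reachable_delVert hw hb,
      fun hvw => hBC ?_⟩
    have hab : (delVert H u).Reachable a b := hv.trans (hvw.trans hw.symm)
    ext x
    exact ⟨hab.symm.trans, hab.trans⟩
  · rintro ⟨v, w, he, hv, hw, hvw⟩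
    refine ⟨v, w, he, _, ⟨v, hv, rfl⟩, _, ⟨w, hw, rfl⟩, fun hEq => hvw ?_,
      SimpleGraph.Reachable.refl v, SimpleGraph.Reachable.refl w⟩
    have : v ∈ {x | (delVert H u).Reachable w x} := hEq ▸ SimpleGraph.Reachable.refl v
    exact this.symm

lemma delVert_mono {H H' : SimpleGraph V} (h : H ≤ H') (u : V) :
    delVert H u ≤ delVert H' u :=
  fun _ _ ⟨hab, ha, hb⟩ => ⟨h hab, ha, hb⟩

lemma Crosses.compPartition_of_le {H H' : SimpleGraph V} (h : H ≤ H') {u : V} {e : Sym2 V}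
    (hc : Crosses (compPartition H' u) e) : Crosses (compPartition H u) e := by
  rw [crosses_compPartition_iff] at hc ⊢
  obtain ⟨v, w, he, hv, hw, hvw⟩ := hc
  exact ⟨v, w, he, hv, hw, fun hvw' => hvw (hvw'.mono (delVert_mono h u))⟩

lemma incSet_antitone {m : ℕ} (T : SimpleGraph V) (ℓseq : Fin m → Sym2 V) {i i' : ℕ}
    (hii : i ≤ i') (e : Sym2 V) : incSet T ℓseq i' e ⊆ incSet T ℓseq i e := by
  refine fun u ⟨hu, hc⟩ => ⟨hu, hc.compPartition_of_le (sup_le_sup_left ?_ T)⟩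
  refine SimpleGraph.fromEdgeSet_mono ?_
  rintro _ ⟨j, hj, rfl⟩
  exact ⟨j, hj.trans_le hii, rfl⟩

noncomputable def greedyRatio {m : ℕ} (T : SimpleGraph V) (cost : Sym2 V → ℝ)
    (ℓseq : Fin m → Sym2 V) (i : Fin m) : ℝ :=
  cost (ℓseq i) / ((incSet T ℓseq (i : ℕ) (ℓseq i)).ncard : ℝ)

namespace IsGreedyRun

variable {G T : SimpleGraph V} {cost : Sym2 V → ℝ} {m : ℕ} {ℓseq : Fin m → Sym2 V}

lemma greedyRatio_nonneg (hcost : ∀ ℓ ∈ links G T, 0 ≤ cost ℓ)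
    (hrun : IsGreedyRun G T cost m ℓseq) (i : Fin m) : 0 ≤ greedyRatio T cost ℓseq i :=
  div_nonneg (hcost _ (hrun.2.1 i)) (Nat.cast_nonneg _)

lemma greedyRatio_monotone [Finite V] (hcost : ∀ ℓ ∈ links G T, 0 ≤ cost ℓ)
    (hrun : IsGreedyRun G T cost m ℓseq) : Monotone (greedyRatio T cost ℓseq) := by
  intro i i' hii
  have hsub := incSet_antitone T ℓseq (Fin.val_le_of_le hii) (ℓseq i')
  have hne' : (incSet T ℓseq i' (ℓseq i')).Nonempty := (hrun.2.2.1 i').1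
  have hcard : ((incSet T ℓseq i' (ℓseq i')).ncard : ℝ) ≤ (incSet T ℓseq i (ℓseq i')).ncard :=
    mod_cast Set.ncard_le_ncard hsub (Set.toFinite _)
  calc greedyRatio T cost ℓseq i
      ≤ cost (ℓseq i') / (incSet T ℓseq i (ℓseq i')).ncard :=
        (hrun.2.2.1 i).2 _ (hrun.2.1 i') (hne'.mono hsub)
    _ ≤ greedyRatio T cost ℓseq i' :=
        div_le_div_of_nonneg_left (hcost _ (hrun.2.1 i'))
          (mod_cast (Set.ncard_pos (Set.toFinite _)).mpr hne') hcard

end IsGreedyRun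

variable [Fintype V]

/-- `sig u` enumerates, in increasing order, the iterations whose picked link crosses `u`'s
current partition, and `w u j = wgt(𝒫̂^{j+1}_u)`. -/
theorem assigned_weights_monotone_general
    (G T : SimpleGraph V)
    (cost : Sym2 V → ℝ) (hcost : ∀ ℓ ∈ links G T, 0 ≤ cost ℓ)
    (m : ℕ) (ℓseq : Fin m → Sym2 V) (hrun : IsGreedyRun G T cost m ℓseq)
    (sig : (u : V) → Fin (nblocks T u - 1) → Fin m)
    (hsig : ∀ u : V, NonLeaf T u → StrictMono (sig u) ∧
      ∀ i : Fin m, Crosses (curPtn T ℓseq (i : ℕ) u) (ℓseq i) ↔ ∃ j, sig u j = i)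
    (w : (u : V) → Fin (nblocks T u - 1) → ℝ)
    (hw : ∀ (u : V) (j : Fin (nblocks T u - 1)),
      w u j = cost (ℓseq (sig u j)) /
        ((incSet T ℓseq ((sig u j : Fin m) : ℕ) (ℓseq (sig u j))).ncard : ℝ)) :
    ∀ u : V, NonLeaf T u →
      (∀ j : Fin (nblocks T u - 1), 0 ≤ w u j) ∧
      (∀ j j' : Fin (nblocks T u - 1), j ≤ j' → w u j ≤ w u j') := by
  intro u hu
  have hwu : w u = greedyRatio T cost ℓseq ∘ sig u := funext (hw u)
  refine ⟨fun j => ?_, fun j j' hjj => ?_⟩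
  · rw [hwu]
    exact hrun.greedyRatio_nonneg hcost _
  · rw [hwu]
    exact hrun.greedyRatio_monotone hcost ((hsig u hu).1.monotone hjj)

/-- In any greedy run, for each non-leaf node `u` the weights assigned to
`u`'s partitions are nondecreasing along the order of assignment; equivalently, all the
dual values `y(𝒫)` (the consecutive differences of the weights, and `0` on partitions
never assigned a weight) are nonnegative. Here `sig u` enumerates, in increasing order,
the iterations whose picked link crosses `u`'s current partition, and
`w u j = wgt(𝒫̂^{j+1}_u)` is the cost-coverage ratio of the picking iteration. -/
theorem assigned_weights_monotone
    (G T : SimpleGraph V) (hV : 3 ≤ Fintype.card V) (hTG : T ≤ G) (hT : T.IsTree)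
    (cost : Sym2 V → ℝ) (hcost : ∀ ℓ ∈ links G T, 0 ≤ cost ℓ)
    (m : ℕ) (ℓseq : Fin m → Sym2 V) (hrun : IsGreedyRun G T cost m ℓseq)
    (sig : (u : V) → Fin (nblocks T u - 1) → Fin m)
    (hsig : ∀ u : V, NonLeaf T u → StrictMono (sig u) ∧
      ∀ i : Fin m, Crosses (curPtn T ℓseq (i : ℕ) u) (ℓseq i) ↔ ∃ j, sig u j = i)
    (w : (u : V) → Fin (nblocks T u - 1) → ℝ)
    (hw : ∀ (u : V) (j : Fin (nblocks T u - 1)),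
      w u j = cost (ℓseq (sig u j)) /
        ((incSet T ℓseq ((sig u j : Fin m) : ℕ) (ℓseq (sig u j))).ncard : ℝ)) :
    ∀ u : V, NonLeaf T u →
      (∀ j : Fin (nblocks T u - 1), 0 ≤ w u j) ∧
      (∀ j j' : Fin (nblocks T u - 1), j ≤ j' → w u j ≤ w u j') :=
  assigned_weights_monotone_general G T cost hcost m ℓseq hrun sig hsig w hw

end TwoNCTAP
end

section
/- Consider the 2NC-TAP instance with V = {r, v_1, v_2, v_3, p_1, p_2, p_3, q_1, q_2, q_3}, spanning tree T with edges r v_i, v_i p_i, and v_i q_i for i ∈ {1,2,3} (cost 0), and links p_i p_j and q_i q_j for 1 ≤ i < j ≤ 3, each of cost 1. Then every set F of links such that T ∪ F is 2-node-connected satisfies |F| ≥ 4; i.e., the optimal integral value of this instance is at least 4. -/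
/-!
Deleting `v_i` leaves `p_i` and `q_i` without tree edges, so in a 2-node-connected `T ∪ F`
every leaf `p_i`, `q_i` is an endpoint of a link of `F`. The links at the `p_i` are the edges
of a triangle, and one edge covers only two of its three corners, so `F` contains at least
two `p`-links; likewise at least two `q`-links.
-/

namespace TwoNCTAP

variable {V : Type*}

def TwoNodeConnected {W : Type*} [Fintype W] (H : SimpleGraph W) : Prop :=
  3 ≤ Fintype.card W ∧ H.Connected ∧
    ∀ u v w : W, v ≠ u → w ≠ u → (delVert H u).Reachable v w

lemma TwoNodeConnected.exists_link_mem_of_forall_adj_eq [Fintype V] {T : SimpleGraph V}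
    {F : Set (Sym2 V)} (h : TwoNodeConnected (withLinks T F)) {x u w : V} (hxu : x ≠ u)
    (hwu : w ≠ u) (hxw : x ≠ w) (hTx : ∀ b, T.Adj x b → b = u) : ∃ e ∈ F, x ∈ e := by
  obtain ⟨p⟩ := h.2.2 u x w hxu hwu
  cases p with
  | nil => exact absurd rfl hxw
  | cons hadj _ =>
    obtain ⟨hT | ⟨hF, -⟩, -, hbu⟩ := hadj
    · exact absurd (hTx _ hT) hbu
    · exact ⟨_, hF, Sym2.mem_mk_left _ _⟩

lemma two_le_ncard_of_covers_three [Finite V] {S : Set (Sym2 V)} {a b c : V}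
    (hab : a ≠ b) (hac : a ≠ c) (hbc : b ≠ c) (ha : ∃ e ∈ S, a ∈ e) (hb : ∃ e ∈ S, b ∈ e)
    (hc : ∃ e ∈ S, c ∈ e) : 2 ≤ S.ncard := by
  by_contra! hS
  have hsub : S.Subsingleton := Set.ncard_le_one_iff_subsingleton.1 (by omega)
  obtain ⟨e, he, hae⟩ := ha
  obtain ⟨e', he', hbe⟩ := hb
  obtain ⟨e'', he'', hce⟩ := hc
  rw [hsub he' he] at hbe
  rw [hsub he'' he, (Sym2.mem_and_mem_iff hab).1 ⟨hae, hbe⟩, Sym2.mem_iff] at hce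
  rcases hce with rfl | rfl <;> contradiction

/-- Consider the 2NC-TAP instance with vertices
`r = 0`, `v_i = i`, `p_i = i + 3`, `q_i = i + 6` (`i ∈ {1,2,3}`), spanning tree `T` with
edges `r v_i`, `v_i p_i`, `v_i q_i`, and unit-cost links `p_i p_j`, `q_i q_j` for
`1 ≤ i < j ≤ 3`. Every set `F` of links such that `T ∪ F` is 2-node-connected satisfies
`|F| ≥ 4`; i.e., the optimal integral value of this instance is at least `4`. -/
theorem integral_optimum_at_least_four
    (T : SimpleGraph (Fin 10))
    (hT : T = SimpleGraph.fromEdgeSet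
      {s((0 : Fin 10), 1), s((0 : Fin 10), 2), s((0 : Fin 10), 3),
       s((1 : Fin 10), 4), s((2 : Fin 10), 5), s((3 : Fin 10), 6),
       s((1 : Fin 10), 7), s((2 : Fin 10), 8), s((3 : Fin 10), 9)})
    (Lk : Set (Sym2 (Fin 10)))
    (hLk : Lk = {s((4 : Fin 10), 5), s((4 : Fin 10), 6), s((5 : Fin 10), 6),
                 s((7 : Fin 10), 8), s((7 : Fin 10), 9), s((8 : Fin 10), 9)})
    (F : Set (Sym2 (Fin 10))) (hF : F ⊆ Lk)
    (h2nc : TwoNodeConnected (withLinks T F)) :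
    4 ≤ F.ncard := by
  subst hT hLk
  have hleaf (x : Fin 10) (hx : 4 ≤ x) : ∃ e ∈ F, x ∈ e := by
    refine h2nc.exists_link_mem_of_forall_adj_eq (u := if x ≤ 6 then x - 3 else x - 6) (w := 0)
      ?_ ?_ ?_ ?_ <;> fin_cases x <;> simp_all
  set P : Set (Sym2 (Fin 10)) := {s(4, 5), s(4, 6), s(5, 6)}
  set Q : Set (Sym2 (Fin 10)) := {s(7, 8), s(7, 9), s(8, 9)}
  have hcoverP (x : Fin 10) (h4 : 4 ≤ x) (h6 : x ≤ 6) : ∃ e ∈ F ∩ P, x ∈ e := by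
    obtain ⟨e, he, hxe⟩ := hleaf x h4
    refine ⟨e, ⟨he, ?_⟩, hxe⟩
    rcases hF he with rfl | rfl | rfl | rfl | rfl | rfl <;> simp [P] at hxe ⊢ <;> omega
  have hcoverQ (x : Fin 10) (h7 : 7 ≤ x) : ∃ e ∈ F ∩ Q, x ∈ e := by
    obtain ⟨e, he, hxe⟩ := hleaf x (by omega)
    refine ⟨e, ⟨he, ?_⟩, hxe⟩
    rcases hF he with rfl | rfl | rfl | rfl | rfl | rfl <;> simp [Q] at hxe ⊢ <;> omega
  have hPQ : Disjoint P Q := by simp [P, Q, Set.disjoint_left]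
  calc 4 = 2 + 2 := rfl
    _ ≤ (F ∩ P).ncard + (F ∩ Q).ncard := add_le_add
        (two_le_ncard_of_covers_three (by decide) (by decide) (by decide)
          (hcoverP 4 le_rfl (by decide)) (hcoverP 5 (by decide) (by decide))
          (hcoverP 6 (by decide) le_rfl))
        (two_le_ncard_of_covers_three (by decide) (by decide) (by decide)
          (hcoverQ 7 le_rfl) (hcoverQ 8 (by decide)) (hcoverQ 9 (by decide)))
    _ = (F ∩ P ∪ F ∩ Q).ncard :=
      (Set.ncard_union_eq (hPQ.mono Set.inter_subset_right Set.inter_subset_right)).symm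
    _ ≤ F.ncard :=
      Set.ncard_le_ncard (Set.union_subset Set.inter_subset_left Set.inter_subset_left)

end TwoNCTAP
end

section
/- Let n ≥ 4 and let G be the graph on nodes {r, u_1, …, u_{n−1}} consisting of the spanning star T = K_{1,n−1} with center r and leaves u_1, …, u_{n−1} (tree edges of cost 0), together with the n−1 unit-cost links u_i u_{i+1} for i ∈ [n−2] and u_{n−1} u_1 (forming a cycle on the leaves of T). Then every set F of links such that T ∪ F is 2-node-connected satisfies |F| ≥ n−2; i.e., every integral feasible solution of this 2NC-TAP instance has cost at least n−2. -/
/-!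
Deleting the center `r` of the star leaves only links as edges, and by 2-node-connectivity the
`n - 1` leaves still form one connected component. A connected graph on `n - 1` nodes has at
least `n - 2` edges, so `F` contains at least `n - 2` links.
-/

open scoped Classical
open Finset

namespace SimpleGraph.ConnectedComponent

variable {W : Type*} {G : SimpleGraph W}

lemma ncard_supp_le_ncard_edgeSet_add_one [Finite W] (C : G.ConnectedComponent) :
    C.supp.ncard ≤ G.edgeSet.ncard + 1 := by
  have hedges : Nat.card C.toSimpleGraph.edgeSet ≤ Nat.card G.edgeSet :=
    Nat.card_le_card_of_injective _ (Embedding.induce C.supp).mapEdgeSet.injective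
  exact C.connected_toSimpleGraph.card_vert_le_card_edgeSet_add_one.trans
    (Nat.add_le_add_right hedges 1)

end SimpleGraph.ConnectedComponent

namespace TwoNCTAP

lemma edgeSet_delVert_withLinks_subset {T : SimpleGraph V} {F : Set (Sym2 V)} {u : V}
    (hT : ∀ a b, T.Adj a b → a = u ∨ b = u) : (delVert (withLinks T F) u).edgeSet ⊆ F := by
  intro e he
  induction e using Sym2.ind with
  | _ a b =>
    obtain ⟨hT' | hF, ha, hb⟩ := he
    · exact ((hT a b hT').elim ha hb).elim
    · exact hF.1

lemma TwoNodeConnected.card_sub_two_le_ncard_edgeSet_delVert {W : Type*} [Fintype W]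
    {H : SimpleGraph W} (h : TwoNodeConnected H) (u : W) :
    Fintype.card W - 2 ≤ (delVert H u).edgeSet.ncard := by
  obtain ⟨v, hv⟩ : ∃ v, v ≠ u := Fintype.exists_ne_of_one_lt_card (by linarith [h.1]) u
  have hsupp : {u}ᶜ ⊆ ((delVert H u).connectedComponentMk v).supp := fun w hw =>
    SimpleGraph.ConnectedComponent.sound (h.2.2 u w v hw hv)
  have hcompl : ({u}ᶜ : Set W).ncard = Fintype.card W - 1 := by
    rw [Set.ncard_compl, Set.ncard_singleton, Nat.card_eq_fintype_card]
  have := (Set.ncard_le_ncard hsupp).trans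
    (delVert H u |>.connectedComponentMk v).ncard_supp_le_ncard_edgeSet_add_one
  omega

lemma star_adj_val_eq_zero {n : ℕ} {a b : Fin n}
    (h : (SimpleGraph.fromEdgeSet
      {e | ∃ r i : Fin n, (r : ℕ) = 0 ∧ 1 ≤ (i : ℕ) ∧ e = s(r, i)}).Adj a b) :
    (a : ℕ) = 0 ∨ (b : ℕ) = 0 := by
  obtain ⟨⟨r, i, hr, -, hab⟩, -⟩ := h
  rcases Sym2.eq_iff.mp hab with ⟨rfl, -⟩ | ⟨-, rfl⟩
  · exact .inl hr
  · exact .inr hr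

theorem star_instance_integral_lower_bound_general
    (n : ℕ)
    (T : SimpleGraph (Fin n))
    (hT : T = SimpleGraph.fromEdgeSet
      {e | ∃ r i : Fin n, (r : ℕ) = 0 ∧ 1 ≤ (i : ℕ) ∧ e = s(r, i)})
    (F : Set (Sym2 (Fin n)))
    (h2nc : TwoNodeConnected (withLinks T F)) :
    n - 2 ≤ F.ncard := by
  have hn_pos : 0 < n := by
    have := h2nc.1
    rw [Fintype.card_fin] at this
    omega
  let r : Fin n := ⟨0, hn_pos⟩
  have hstar : ∀ a b, T.Adj a b → a = r ∨ b = r := fun a b hab => by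
    subst hT
    simpa [r, Fin.ext_iff] using star_adj_val_eq_zero hab
  calc n - 2 = Fintype.card (Fin n) - 2 := by rw [Fintype.card_fin]
    _ ≤ (delVert (withLinks T F) r).edgeSet.ncard :=
      h2nc.card_sub_two_le_ncard_edgeSet_delVert r
    _ ≤ F.ncard := Set.ncard_le_ncard (edgeSet_delVert_withLinks_subset hstar) F.toFinite

/-- For the 2NC-TAP instance whose tree is the star `K_{1,n−1}` with
center `r = 0` and leaves `u_1, …, u_{n−1}` (here `1, …, n−1 : Fin n`), and whose links
form the cycle `u_1 u_2, …, u_{n−2} u_{n−1}, u_{n−1} u_1` on the leaves, every set `F` of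
links such that `T ∪ F` is 2-node-connected satisfies `|F| ≥ n − 2`. -/
theorem star_instance_integral_lower_bound
    (n : ℕ) (hn : 4 ≤ n)
    (T : SimpleGraph (Fin n))
    (hT : T = SimpleGraph.fromEdgeSet
      {e | ∃ r i : Fin n, (r : ℕ) = 0 ∧ 1 ≤ (i : ℕ) ∧ e = s(r, i)})
    (Lk : Set (Sym2 (Fin n)))
    (hLk : Lk = {e | (∃ i j : Fin n, 1 ≤ (i : ℕ) ∧ (i : ℕ) ≤ n - 2 ∧
          (j : ℕ) = (i : ℕ) + 1 ∧ e = s(i, j)) ∨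
        (∃ a b : Fin n, (a : ℕ) = n - 1 ∧ (b : ℕ) = 1 ∧ e = s(a, b))})
    (F : Set (Sym2 (Fin n))) (hF : F ⊆ Lk)
    (h2nc : TwoNodeConnected (withLinks T F)) :
    n - 2 ≤ F.ncard :=
  star_instance_integral_lower_bound_general n T hT F h2nc

end TwoNCTAP
end

section
/- Let G = (V, E) be a finite simple 2-edge-connected graph with |V| ≥ 3 and positive edge costs c, and let (G', c') be its inflated instance. Then the optimal value of the cut LP for (G, c) equals the optimal value of the partition LP for (G', c'), i.e., min{Σ_{e∈E} c_e x_e : x ∈ P_EC(G)} = min{Σ_{e'∈E'} c'_{e'} x'_{e'} : x' ∈ P_NC(G')}; moreover, the minimum cost of an integral point of P_EC(G) equals the minimum cost of an integral point of P_NC(G'). Consequently, the integrality ratio of the cut LP for (G, c) equals the integrality ratio of the partition LP for (G', c'). -/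
open scoped Classical
open Finset

namespace TwoNCTAP

variable {V : Type*}

/-- The edge `e` lies in the cut `δ(S)`: it has exactly one endpoint in `S`. -/
def inCut (S : Set V) (e : Sym2 V) : Prop :=
  ∃ a b, e = s(a, b) ∧ a ∈ S ∧ b ∉ S

/-- `G` is 2-edge-connected: it is connected and remains connected after deleting any
single edge. -/
def TwoEdgeConnected (G : SimpleGraph V) : Prop :=
  G.Connected ∧ ∀ e ∈ G.edgeSet, (G.deleteEdges {e}).Connected

/-- The vertex set of the inflated instance: pairs `(v, e)` with `e ∈ E(G)` and
`v` an endpoint of `e`. -/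
abbrev InflVert (G : SimpleGraph V) : Type _ :=
  {p : V × Sym2 V // p.2 ∈ G.edgeSet ∧ p.1 ∈ p.2}

/-- The inflated graph `G'`: `(v, e)` and `(w, f)` are adjacent iff they are distinct and
either `v = w` (a clique edge) or `e = f` (the inter-clique edge of `e`). -/
def Infl (G : SimpleGraph V) : SimpleGraph (InflVert G) where
  Adj a b := a ≠ b ∧ (a.val.1 = b.val.1 ∨ a.val.2 = b.val.2)
  symm := ⟨by
    rintro a b ⟨h1, h2 | h2⟩
    · exact ⟨h1.symm, Or.inl h2.symm⟩
    · exact ⟨h1.symm, Or.inr h2.symm⟩⟩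
  loopless := ⟨by rintro a ⟨h, -⟩; exact h rfl⟩

/-- The graph `(V', F')` consisting of the clique edges only. -/
def cliqueGraph (G : SimpleGraph V) : SimpleGraph (InflVert G) where
  Adj a b := a ≠ b ∧ a.val.1 = b.val.1
  symm := ⟨by rintro a b ⟨h1, h2⟩; exact ⟨h1.symm, h2.symm⟩⟩
  loopless := ⟨by rintro a ⟨h, -⟩; exact h rfl⟩

variable [Fintype V]

/-- The objective value `Σ_{e ∈ E(H)} c_e x_e` of `x` for costs `c` on the edges of `H`. -/
noncomputable def obj {W : Type*} [Fintype W] (H : SimpleGraph W) (c x : Sym2 W → ℝ) : ℝ :=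
  ∑ e ∈ Finset.univ.filter (fun e : Sym2 W => e ∈ H.edgeSet), c e * x e

/-- The feasible region `P_EC(G)` of the cut LP relaxation of min-cost 2ECSS. -/
def PEC (G : SimpleGraph V) : Set (Sym2 V → ℝ) :=
  {x | (∀ e ∈ G.edgeSet, 0 ≤ x e ∧ x e ≤ 1) ∧
    ∀ S : Set V, S.Nonempty → S ≠ Set.univ →
      (2 : ℝ) ≤ ∑ e ∈ Finset.univ.filter
          (fun e : Sym2 V => e ∈ G.edgeSet ∧ inCut S e), x e}

/-- The feasible region `P_NC(G')` of the partition LP relaxation of min-cost 2NCSS for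
the inflated instance: `0 ≤ x ≤ 1`, the cut constraints, and for every `w ∈ V'` and every
partition `P` of `V' ∖ {w}` whose blocks are unions of vertex sets of connected
components of `(V', F') − w`, the partition constraint. -/
def PNC (G : SimpleGraph V) : Set (Sym2 (InflVert G) → ℝ) :=
  {x | (∀ f ∈ (Infl G).edgeSet, 0 ≤ x f ∧ x f ≤ 1) ∧
    (∀ S : Set (InflVert G), S.Nonempty → S ≠ Set.univ →
      (2 : ℝ) ≤ ∑ f ∈ Finset.univ.filter
          (fun f : Sym2 (InflVert G) => f ∈ (Infl G).edgeSet ∧ inCut S f), x f) ∧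
    ∀ (w : InflVert G) (P : Set (Set (InflVert G))),
      IsPartitionOf P {v | v ≠ w} →
      (∀ B ∈ compPartition (cliqueGraph G) w, ∃ C ∈ P, B ⊆ C) →
      (P.ncard : ℝ) - 1 ≤ ∑ f ∈ Finset.univ.filter
          (fun f : Sym2 (InflVert G) => f ∈ (Infl G).edgeSet ∧ Crosses P f), x f}

end TwoNCTAP

/-!
Inflating a point `x` of `P_EC(G)` (value `1` on clique edges, `x_e` on `e'`) and deflating a
point `x'` of `P_NC(G')` (`x_e := x'_{e'}`) are maps between the two feasible regions that
preserve cost, since clique edges cost nothing, and integrality. So the sets of attained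
objective values, fractional and integral, coincide, and with them all infima and ratios.

A cut of `G` pulls back to a cut of `G'` crossed by no clique edge, so deflation is feasible.
For inflation, a cut of `G'` crossed by two clique edges has value at least `2`; one crossed by
none is the preimage of a cut of `G`; if exactly one clique edge `ab` crosses it, moving `b`
across gives such a preimage and changes only the inter-clique edge at `b`, of value at most
`1`. For a partition constraint at `w`, the blocks of `P` induce a partition of `V` into `k`
classes; summing the cut constraints of its classes shows that at least `k` units of `x` cross
it, and all of them but the inter-clique edge at `w` cross `P`.
-/

namespace TwoNCTAP

variable {V : Type*}

section Cut

variable {α β : Type*} {S S' : Set α} {e : Sym2 α}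

lemma inCut_mk {a b : α} :
    inCut S s(a, b) ↔ (a ∈ S ∧ b ∉ S) ∨ (b ∈ S ∧ a ∉ S) := by
  constructor
  · rintro ⟨x, y, hxy, hx, hy⟩
    rcases Sym2.eq_iff.mp hxy with ⟨rfl, rfl⟩ | ⟨rfl, rfl⟩
    exacts [Or.inl ⟨hx, hy⟩, Or.inr ⟨hx, hy⟩]
  · rintro (⟨ha, hb⟩ | ⟨hb, ha⟩)
    exacts [⟨a, b, rfl, ha, hb⟩, ⟨b, a, Sym2.eq_swap, hb, ha⟩]

lemma inCut_congr (h : ∀ a ∈ e, a ∈ S ↔ a ∈ S') : inCut S e ↔ inCut S' e := by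
  induction e using Sym2.ind with
  | _ a b =>
    rw [inCut_mk, inCut_mk, h a (Sym2.mem_mk_left a b), h b (Sym2.mem_mk_right a b)]

lemma inCut_compl : inCut Sᶜ e ↔ inCut S e := by
  induction e using Sym2.ind with
  | _ a b => simp only [inCut_mk, Set.mem_compl_iff, not_not]; tauto

lemma inCut_preimage (g : α → β) (T : Set β) : inCut (g ⁻¹' T) e ↔ inCut T (e.map g) := by
  induction e using Sym2.ind with
  | _ a b => simp only [Sym2.map_mk, inCut_mk, Set.mem_preimage]

lemma not_isDiag_of_inCut (h : inCut S e) : ¬ e.IsDiag := by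
  obtain ⟨a, b, rfl, ha, hb⟩ := h
  exact fun hd => hb (Sym2.mk_isDiag_iff.mp hd ▸ ha)

end Cut

lemma sum_le_sum_erase_add {ι M : Type*} [DecidableEq ι] [AddCommMonoid M] [PartialOrder M]
    [IsOrderedAddMonoid M] (s : Finset ι) (y : ι → M) {i : ι} (hi : 0 ≤ y i) :
    ∑ j ∈ s, y j ≤ ∑ j ∈ s.erase i, y j + y i := by
  by_cases h : i ∈ s
  · rw [sum_erase_add s y h]
  · rw [erase_eq_of_notMem h]
    exact le_add_of_nonneg_right hi

section Inflation

variable {G : SimpleGraph V}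

/-- The projection `(v, e) ↦ v` on edges of `G'`: it sends the inter-clique edge `e'` to `e`
and every clique edge to the diagonal. -/
def baseEdge (f : Sym2 (InflVert G)) : Sym2 V := f.map fun a => a.val.1

/-- The inter-clique edge `e'` of `e`. -/
def interEdge {e : Sym2 V} (he : e ∈ G.edgeSet) : Sym2 (InflVert G) :=
  e.pmap (fun v hv => ⟨(v, e), he, hv⟩) fun _ => id

lemma interEdge_mk {u w : V} (he : s(u, w) ∈ G.edgeSet) :
    interEdge he = s(⟨(u, s(u, w)), he, Sym2.mem_mk_left u w⟩,
      ⟨(w, s(u, w)), he, Sym2.mem_mk_right u w⟩) := rfl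

lemma baseEdge_interEdge {e : Sym2 V} (he : e ∈ G.edgeSet) : baseEdge (interEdge he) = e := by
  induction e using Sym2.ind with
  | _ u w => rfl

lemma interEdge_mem_edgeSet {e : Sym2 V} (he : e ∈ G.edgeSet) :
    interEdge he ∈ (Infl G).edgeSet := by
  induction e using Sym2.ind with
  | _ u w =>
    rw [interEdge_mk, SimpleGraph.mem_edgeSet]
    exact ⟨fun h => G.ne_of_adj he (congrArg (fun a => a.val.1) h), Or.inr rfl⟩

variable {f : Sym2 (InflVert G)}

lemma snd_eq_baseEdge (hf : f ∈ (Infl G).edgeSet) (hd : ¬ (baseEdge f).IsDiag)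
    {c : InflVert G} (hc : c ∈ f) : c.val.2 = baseEdge f := by
  induction f using Sym2.ind with
  | _ a b =>
    have hab : a.val.1 ≠ b.val.1 := fun h => hd (Sym2.mk_isDiag_iff.mpr h)
    rw [SimpleGraph.mem_edgeSet] at hf
    obtain ⟨-, h | h⟩ := hf
    · exact absurd h hab
    have ha : a.val.2 = s(a.val.1, b.val.1) :=
      (Sym2.mem_and_mem_iff hab).mp ⟨a.2.2, h ▸ b.2.2⟩
    rcases Sym2.mem_iff.mp hc with rfl | rfl
    · exact ha
    · exact h.symm.trans ha

lemma baseEdge_mem_edgeSet (hf : f ∈ (Infl G).edgeSet) (hd : ¬ (baseEdge f).IsDiag) :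
    baseEdge f ∈ G.edgeSet :=
  snd_eq_baseEdge hf hd (Sym2.out_fst_mem f) ▸ f.out.1.2.1

lemma interEdge_baseEdge (hf : f ∈ (Infl G).edgeSet) (hd : ¬ (baseEdge f).IsDiag) :
    interEdge (baseEdge_mem_edgeSet hf hd) = f := by
  induction f using Sym2.ind with
  | _ a b =>
    have ha := snd_eq_baseEdge hf hd (Sym2.mem_mk_left a b)
    have hb := snd_eq_baseEdge hf hd (Sym2.mem_mk_right a b)
    exact congrArg₂ (fun c d => s(c, d)) (Subtype.ext (Prod.ext rfl ha.symm))
      (Subtype.ext (Prod.ext rfl hb.symm))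

lemma eq_interEdge_of_mem (hf : f ∈ (Infl G).edgeSet) (hd : ¬ (baseEdge f).IsDiag)
    {c : InflVert G} (hc : c ∈ f) : f = interEdge c.2.1 := by
  conv_lhs => rw [← interEdge_baseEdge hf hd]
  congr 1
  exact (snd_eq_baseEdge hf hd hc).symm

lemma exists_fst_ne (a : InflVert G) : ∃ z : InflVert G, z.val.1 ≠ a.val.1 := by
  obtain ⟨u, hu⟩ := Sym2.mem_iff_exists.mp a.2.2
  have hadj : G.Adj a.val.1 u := by rw [← SimpleGraph.mem_edgeSet, ← hu]; exact a.2.1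
  exact ⟨⟨(u, a.val.2), a.2.1, hu ▸ Sym2.mem_mk_right _ _⟩, hadj.ne.symm⟩

variable {c : Sym2 V → ℝ} {c' : Sym2 (InflVert G) → ℝ}

lemma cost_infl (hc'cl : ∀ a b : InflVert G, a ≠ b → a.val.1 = b.val.1 → c' s(a, b) = 0)
    (hc'in : ∀ a b : InflVert G, a ≠ b → a.val.2 = b.val.2 → c' s(a, b) = c a.val.2)
    {f : Sym2 (InflVert G)} (hf : f ∈ (Infl G).edgeSet) :
    c' f = if (baseEdge f).IsDiag then 0 else c (baseEdge f) := by
  induction f using Sym2.ind with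
  | _ a b =>
    obtain ⟨hab, h1 | h2⟩ : (Infl G).Adj a b := id hf
    · rw [if_pos (show (baseEdge s(a, b)).IsDiag from Sym2.mk_isDiag_iff.mpr h1),
        hc'cl a b hab h1]
    · have hd : ¬ (baseEdge s(a, b)).IsDiag :=
        fun hd => hab (Subtype.ext (Prod.ext (Sym2.mk_isDiag_iff.mp hd) h2))
      rw [if_neg hd, hc'in a b hab h2, snd_eq_baseEdge hf hd (Sym2.mem_mk_left a b)]

end Inflation

section Sums

variable [Fintype V] {G : SimpleGraph V}

lemma sum_filter_interClique {M : Type*} [AddCommMonoid M] (q : Sym2 V → Prop) [DecidablePred q]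
    (y : Sym2 V → M) :
    ∑ f ∈ univ.filter
        (fun f => f ∈ (Infl G).edgeSet ∧ ¬ (baseEdge f).IsDiag ∧ q (baseEdge f)),
      y (baseEdge f) = ∑ e ∈ univ.filter (fun e => e ∈ G.edgeSet ∧ q e), y e := by
  apply sum_nbij baseEdge
  · simp only [mem_filter, mem_univ, true_and]
    exact fun f ⟨hf, hd, hq⟩ => ⟨baseEdge_mem_edgeSet hf hd, hq⟩
  · intro f hf g hg hfg
    simp only [mem_coe, mem_filter, mem_univ, true_and] at hf hg
    rw [← interEdge_baseEdge hf.1 hf.2.1, ← interEdge_baseEdge hg.1 hg.2.1]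
    congr 1
  · intro e he
    simp only [mem_coe, mem_filter, mem_univ, true_and] at he
    refine ⟨interEdge he.1, ?_, baseEdge_interEdge he.1⟩
    simp only [mem_coe, mem_filter, mem_univ, true_and, baseEdge_interEdge]
    exact ⟨interEdge_mem_edgeSet he.1, G.not_isDiag_of_mem_edgeSet he.1, he.2⟩
  · exact fun _ _ => rfl

lemma sum_interClique {M : Type*} [AddCommMonoid M] (y : Sym2 V → M) :
    ∑ f ∈ univ.filter (fun f => f ∈ (Infl G).edgeSet ∧ ¬ (baseEdge f).IsDiag),
        y (baseEdge f)
      = ∑ e ∈ univ.filter (· ∈ G.edgeSet), y e := by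
  simpa only [and_true] using sum_filter_interClique (G := G) (fun _ => True) y

variable {c : Sym2 V → ℝ} {c' : Sym2 (InflVert G) → ℝ}

lemma obj_infl
    (hc' : ∀ f ∈ (Infl G).edgeSet, c' f = if (baseEdge f).IsDiag then 0 else c (baseEdge f))
    (y : Sym2 (InflVert G) → ℝ) :
    obj (Infl G) c' y = ∑ f ∈ univ.filter
      (fun f => f ∈ (Infl G).edgeSet ∧ ¬ (baseEdge f).IsDiag), c (baseEdge f) * y f := by
  rw [← filter_filter, sum_filter, obj]
  refine sum_congr rfl fun f hf => ?_
  rw [hc' f (mem_filter.mp hf).2]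
  split_ifs <;> simp

end Sums

section Points

variable (G : SimpleGraph V)

noncomputable def inflate (x : Sym2 V → ℝ) (f : Sym2 (InflVert G)) : ℝ :=
  if (baseEdge f).IsDiag then 1 else x (baseEdge f)

noncomputable def deflate (x' : Sym2 (InflVert G) → ℝ) (e : Sym2 V) : ℝ :=
  if he : e ∈ G.edgeSet then x' (interEdge he) else 0

variable {G} {x : Sym2 V → ℝ} {x' : Sym2 (InflVert G) → ℝ} {f : Sym2 (InflVert G)}

lemma inflate_of_isDiag (hd : (baseEdge f).IsDiag) : inflate G x f = 1 :=
  if_pos hd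

lemma inflate_of_not_isDiag (hd : ¬ (baseEdge f).IsDiag) : inflate G x f = x (baseEdge f) :=
  if_neg hd

lemma inflate_mem {s : Set ℝ} (hs : 1 ∈ s) (hx : ∀ e ∈ G.edgeSet, x e ∈ s)
    (hf : f ∈ (Infl G).edgeSet) : inflate G x f ∈ s := by
  unfold inflate
  split_ifs with hd
  exacts [hs, hx _ (baseEdge_mem_edgeSet hf hd)]

lemma inflate_nonneg (hx : ∀ e ∈ G.edgeSet, 0 ≤ x e) (hf : f ∈ (Infl G).edgeSet) :
    0 ≤ inflate G x f :=
  inflate_mem (s := Set.Ici 0) (Set.mem_Ici.mpr zero_le_one) hx hf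

lemma deflate_of_mem {e : Sym2 V} (he : e ∈ G.edgeSet) : deflate G x' e = x' (interEdge he) :=
  dif_pos he

lemma deflate_baseEdge (hf : f ∈ (Infl G).edgeSet) (hd : ¬ (baseEdge f).IsDiag) :
    deflate G x' (baseEdge f) = x' f := by
  rw [deflate_of_mem (baseEdge_mem_edgeSet hf hd), interEdge_baseEdge hf hd]

lemma deflate_mem {s : Set ℝ} (hx' : ∀ f ∈ (Infl G).edgeSet, x' f ∈ s) {e : Sym2 V}
    (he : e ∈ G.edgeSet) : deflate G x' e ∈ s := by
  rw [deflate_of_mem he]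
  exact hx' _ (interEdge_mem_edgeSet he)

variable [Fintype V] {c : Sym2 V → ℝ} {c' : Sym2 (InflVert G) → ℝ}

lemma obj_inflate
    (hc' : ∀ f ∈ (Infl G).edgeSet, c' f = if (baseEdge f).IsDiag then 0 else c (baseEdge f))
    (x : Sym2 V → ℝ) : obj (Infl G) c' (inflate G x) = obj G c x := by
  rw [obj_infl hc', obj, ← sum_interClique]
  exact sum_congr rfl fun f hf => by rw [inflate_of_not_isDiag (mem_filter.mp hf).2.2]

lemma obj_deflate
    (hc' : ∀ f ∈ (Infl G).edgeSet, c' f = if (baseEdge f).IsDiag then 0 else c (baseEdge f))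
    (x' : Sym2 (InflVert G) → ℝ) : obj G c (deflate G x') = obj (Infl G) c' x' := by
  rw [obj_infl hc', obj, ← sum_interClique]
  exact sum_congr rfl fun f hf => by
    rw [deflate_baseEdge (mem_filter.mp hf).2.1 (mem_filter.mp hf).2.2]

end Points

section CutConstraints

variable [Fintype V] {G : SimpleGraph V} {x : Sym2 V → ℝ}

lemma deflate_mem_PEC (hsurj : ∀ v : V, ∃ a : InflVert G, a.val.1 = v)
    {x' : Sym2 (InflVert G) → ℝ} (hx' : x' ∈ PNC G) : deflate G x' ∈ PEC G := by
  obtain ⟨hbound, hcut, -⟩ := hx'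
  refine ⟨fun e he => deflate_mem (s := Set.Icc 0 1) hbound he, fun S hne hS => ?_⟩
  set S' := (fun a : InflVert G => a.val.1) ⁻¹' S
  have hne' : S'.Nonempty := by
    obtain ⟨v, hv⟩ := hne
    obtain ⟨a, rfl⟩ := hsurj v
    exact ⟨a, hv⟩
  have hS' : S' ≠ Set.univ := by
    obtain ⟨v, hv⟩ := (Set.ne_univ_iff_exists_notMem S).mp hS
    obtain ⟨a, rfl⟩ := hsurj v
    exact (Set.ne_univ_iff_exists_notMem S').mpr ⟨a, hv⟩
  calc (2 : ℝ) ≤ _ := hcut S' hne' hS'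
    _ = ∑ f ∈ univ.filter (fun f => f ∈ (Infl G).edgeSet ∧ ¬ (baseEdge f).IsDiag ∧
          inCut S (baseEdge f)), deflate G x' (baseEdge f) := by
      refine sum_congr (filter_congr fun f _ => ?_) fun f hf => ?_
      · rw [inCut_preimage]
        exact and_congr_right fun _ => ⟨fun h => ⟨not_isDiag_of_inCut h, h⟩, And.right⟩
      · obtain ⟨-, hf, hd, -⟩ := mem_filter.mp hf
        exact (deflate_baseEdge hf hd).symm
    _ = _ := sum_filter_interClique _ _

variable (G) in
noncomputable def interCut (x : Sym2 V → ℝ) (S : Set (InflVert G)) : ℝ :=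
  ∑ f ∈ univ.filter (fun f => f ∈ (Infl G).edgeSet ∧ ¬ (baseEdge f).IsDiag ∧ inCut S f),
    x (baseEdge f)

lemma sum_cut_inflate (x : Sym2 V → ℝ) (S : Set (InflVert G)) :
    ∑ f ∈ univ.filter (fun f => f ∈ (Infl G).edgeSet ∧ inCut S f), inflate G x f
      = #(univ.filter fun f => f ∈ (Infl G).edgeSet ∧ (baseEdge f).IsDiag ∧ inCut S f)
        + interCut G x S := by
  rw [← sum_filter_add_sum_filter_not _ fun f => (baseEdge f).IsDiag, filter_filter,
    filter_filter, interCut, card_eq_sum_ones, Nat.cast_sum, Nat.cast_one]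
  congr 1
  · exact sum_congr (filter_congr fun _ _ => by tauto) fun f hf =>
      inflate_of_isDiag (mem_filter.mp hf).2.2.1
  · exact sum_congr (filter_congr fun _ _ => by tauto) fun f hf =>
      inflate_of_not_isDiag (mem_filter.mp hf).2.2.1

lemma interCut_nonneg (hx : ∀ e ∈ G.edgeSet, 0 ≤ x e) (S : Set (InflVert G)) :
    0 ≤ interCut G x S :=
  sum_nonneg fun _ hf =>
    hx _ (baseEdge_mem_edgeSet (mem_filter.mp hf).2.1 (mem_filter.mp hf).2.2.1)

lemma interCut_compl (S : Set (InflVert G)) : interCut G x Sᶜ = interCut G x S := by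
  simp only [interCut, inCut_compl]

lemma interCut_preimage (T : Set V) :
    interCut G x ((fun a => a.val.1) ⁻¹' T) =
      ∑ e ∈ univ.filter (fun e => e ∈ G.edgeSet ∧ inCut T e), x e := by
  simp only [interCut, inCut_preimage]
  exact sum_filter_interClique _ _

/-- A set that splits no clique is the preimage of a cut of `G`. -/
lemma two_le_interCut_of_forall_mem (hx : x ∈ PEC G) {S : Set (InflVert G)}
    (hS : ∀ a b : InflVert G, a.val.1 = b.val.1 → a ∈ S → b ∈ S)
    (hne : S.Nonempty) (hS_ne : S ≠ Set.univ) : 2 ≤ interCut G x S := by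
  set T := (fun a : InflVert G => a.val.1) '' S
  have hST : S = (fun a => a.val.1) ⁻¹' T := by
    ext a
    refine ⟨fun ha => ⟨a, ha, rfl⟩, ?_⟩
    rintro ⟨b, hb, hba⟩
    exact hS b a hba hb
  rw [hST, interCut_preimage]
  refine hx.2 T (hne.image _) fun hT => hS_ne ?_
  rw [hST, hT, Set.preimage_univ]

lemma interCut_le_interCut_add (hx : ∀ e ∈ G.edgeSet, 0 ≤ x e) {S S' : Set (InflVert G)}
    (c : InflVert G) (h : ∀ d, d ≠ c → (d ∈ S ↔ d ∈ S')) :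
    interCut G x S ≤ interCut G x S' + x c.val.2 := by
  have hsub : (univ.filter fun f =>
      f ∈ (Infl G).edgeSet ∧ ¬ (baseEdge f).IsDiag ∧ inCut S f).erase (interEdge c.2.1) ⊆
      univ.filter fun f => f ∈ (Infl G).edgeSet ∧ ¬ (baseEdge f).IsDiag ∧ inCut S' f := by
    intro f hf
    rw [mem_erase, mem_filter] at hf
    obtain ⟨hfc, -, hfE, hd, hS⟩ := hf
    refine mem_filter.mpr ⟨mem_univ f, hfE, hd, (inCut_congr fun d hdf => h d ?_).mp hS⟩
    rintro rfl
    exact hfc (eq_interEdge_of_mem hfE hd hdf)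
  calc interCut G x S
      ≤ ∑ f ∈ (univ.filter fun f => f ∈ (Infl G).edgeSet ∧ ¬ (baseEdge f).IsDiag ∧
          inCut S f).erase (interEdge c.2.1), x (baseEdge f)
        + x (baseEdge (interEdge c.2.1)) := sum_le_sum_erase_add _ _ (hx _ (by
          rw [baseEdge_interEdge]; exact c.2.1))
    _ ≤ interCut G x S' + x c.val.2 := by
      rw [baseEdge_interEdge]
      gcongr
      exact sum_le_sum_of_subset_of_nonneg hsub fun f hf _ =>
        hx _ (baseEdge_mem_edgeSet (mem_filter.mp hf).2.1 (mem_filter.mp hf).2.2.1)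

lemma one_le_interCut_of_insert_ne_univ (hx : x ∈ PEC G) {S : Set (InflVert G)}
    {a b : InflVert G} (hab : a.val.1 = b.val.1) (ha : a ∈ S) (hb : b ∉ S)
    (huniq : ∀ c d : InflVert G, c.val.1 = d.val.1 → c ∈ S → d ∉ S →
      s(c, d) = s(a, b))
    (hS : insert b S ≠ Set.univ) : 1 ≤ interCut G x S := by
  have hunsplit :
      ∀ c d : InflVert G, c.val.1 = d.val.1 → c ∈ insert b S → d ∈ insert b S := by
    rintro c d hcd hc
    by_contra hd
    rw [Set.mem_insert_iff, not_or] at hd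
    rcases hc with rfl | hc
    · rcases Sym2.eq_iff.mp (huniq a d (hab.trans hcd) ha hd.2) with ⟨-, h⟩ | ⟨h, -⟩
      exacts [hd.1 h, hb (h ▸ ha)]
    · rcases Sym2.eq_iff.mp (huniq c d hcd hc hd.2) with ⟨-, h⟩ | ⟨-, h⟩
      exacts [hd.1 h, hd.2 (h ▸ ha)]
  have h2 := two_le_interCut_of_forall_mem hx hunsplit (Set.insert_nonempty b S) hS
  have hle := interCut_le_interCut_add (x := x) (fun e he => (hx.1 e he).1) b
    (S := insert b S) (S' := S) fun d hd => by rw [Set.mem_insert_iff, or_iff_right hd]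
  linarith [(hx.1 _ b.2.1).2]

/-- A clique split by exactly one clique edge `s(a, b)`: moving `b` to the side of `a`
(or, if that leaves nothing outside, `a` to the side of `b`) gives a set that splits no
clique, and only the inter-clique edge at the moved vertex changes sides. -/
lemma one_le_interCut (hx : x ∈ PEC G) {S : Set (InflVert G)} {a b : InflVert G}
    (hab : a.val.1 = b.val.1) (ha : a ∈ S) (hb : b ∉ S)
    (huniq : ∀ c d : InflVert G, c.val.1 = d.val.1 → c ∈ S → d ∉ S →
      s(c, d) = s(a, b)) :
    1 ≤ interCut G x S := by
  by_cases hS : insert b S = Set.univ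
  · rw [← interCut_compl]
    refine one_le_interCut_of_insert_ne_univ hx hab.symm hb (not_not.mpr ha) ?_ ?_
    · intro c d hcd hc hd
      exact Sym2.eq_swap.trans ((huniq d c hcd.symm (not_not.mp hd) hc).trans Sym2.eq_swap)
    · obtain ⟨z, hz⟩ := exists_fst_ne a
      have hzS : z ∈ S := (hS ▸ Set.mem_univ z).resolve_left fun h => hz (h ▸ hab.symm)
      intro h
      rcases (h ▸ Set.mem_univ z : z ∈ insert a Sᶜ) with rfl | hz'
      exacts [hz rfl, hz' hzS]
  · exact one_le_interCut_of_insert_ne_univ hx hab ha hb huniq hS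

lemma two_le_sum_cut_inflate (hx : x ∈ PEC G) {S : Set (InflVert G)} (hne : S.Nonempty)
    (hS : S ≠ Set.univ) :
    2 ≤ ∑ f ∈ univ.filter (fun f => f ∈ (Infl G).edgeSet ∧ inCut S f), inflate G x f := by
  rw [sum_cut_inflate]
  set K := univ.filter fun f => f ∈ (Infl G).edgeSet ∧ (baseEdge f).IsDiag ∧ inCut S f
  have hmemK :
      ∀ c d : InflVert G, c.val.1 = d.val.1 → c ∈ S → d ∉ S → s(c, d) ∈ K := by
    intro c d hcd hc hd
    have hne : c ≠ d := fun h => hd (h ▸ hc)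
    exact mem_filter.mpr ⟨mem_univ _, ⟨hne, Or.inl hcd⟩, Sym2.mk_isDiag_iff.mpr hcd,
      inCut_mk.mpr (Or.inl ⟨hc, hd⟩)⟩
  have hI := interCut_nonneg (x := x) (fun e he => (hx.1 e he).1) S
  by_cases hsplit : ∃ a b : InflVert G, a.val.1 = b.val.1 ∧ a ∈ S ∧ b ∉ S
  · obtain ⟨a, b, hab, ha, hb⟩ := hsplit
    rcases Nat.lt_or_ge 1 #K with hK | hK
    · have : (2 : ℝ) ≤ #K := by exact_mod_cast hK
      linarith
    · have hone : 1 ≤ interCut G x S := one_le_interCut hx hab ha hb fun c d hcd hc hd =>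
        card_le_one.mp hK _ (hmemK c d hcd hc hd) _ (hmemK a b hab ha hb)
      have : (1 : ℝ) ≤ #K := by exact_mod_cast card_pos.mpr ⟨_, hmemK a b hab ha hb⟩
      linarith
  · simp only [not_exists, not_and, not_not] at hsplit
    have := two_le_interCut_of_forall_mem hx hsplit hne hS
    linarith [(Nat.cast_nonneg #K : (0 : ℝ) ≤ #K)]

end CutConstraints

section PartitionConstraints

variable {G : SimpleGraph V}

/-- A clique minus `w` is connected in `(V', F') − w`, and it is nonempty since `v` lies on
two edges. -/
lemma exists_block (hdeg : ∀ v : V, ∃ a b : InflVert G, a ≠ b ∧ a.val.1 = v ∧ b.val.1 = v)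
    {w : InflVert G} {P : Set (Set (InflVert G))}
    (hcomp : ∀ B ∈ compPartition (cliqueGraph G) w, ∃ C ∈ P, B ⊆ C) (v : V) :
    ∃ B ∈ P, ∀ a : InflVert G, a.val.1 = v → a ≠ w → a ∈ B := by
  obtain ⟨a₀, ha₀, ha₀w⟩ : ∃ a₀ : InflVert G, a₀.val.1 = v ∧ a₀ ≠ w := by
    obtain ⟨a, b, hab, ha, hb⟩ := hdeg v
    by_cases haw : a = w
    · exact ⟨b, hb, fun hbw => hab (haw.trans hbw.symm)⟩
    · exact ⟨a, ha, haw⟩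
  obtain ⟨C, hC, hsub⟩ := hcomp _ ⟨a₀, ha₀w, rfl⟩
  refine ⟨C, hC, fun a ha haw => hsub ?_⟩
  by_cases h : a₀ = a
  · exact h ▸ SimpleGraph.Reachable.refl a₀
  · exact SimpleGraph.Adj.reachable ⟨⟨h, ha₀.trans ha.symm⟩, ha₀w, haw⟩

lemma crosses_of_not_isDiag_map {w : InflVert G} {P : Set (Set (InflVert G))}
    {q : V → Set (InflVert G)} (hqP : ∀ v, q v ∈ P)
    (hmem : ∀ a : InflVert G, a ≠ w → a ∈ q a.val.1) {f : Sym2 (InflVert G)}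
    (hw : ∀ c ∈ f, c ≠ w) (hq : ¬ ((baseEdge f).map q).IsDiag) : Crosses P f := by
  induction f using Sym2.ind with
  | _ a b =>
    exact ⟨a, b, rfl, q a.val.1, hqP _, q b.val.1, hqP _,
      fun h => hq (Sym2.mk_isDiag_iff.mpr h),
      hmem a (hw a (Sym2.mem_mk_left a b)), hmem b (hw b (Sym2.mem_mk_right a b))⟩

variable [Fintype V] {x : Sym2 V → ℝ}

lemma sum_inCut_fiber {ι : Type*} [DecidableEq ι] (q : V → ι) (y : ℝ) (e : Sym2 V) :
    ∑ i ∈ univ.image q, (if inCut (q ⁻¹' {i}) e then y else 0)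
      = if (e.map q).IsDiag then 0 else 2 * y := by
  induction e using Sym2.ind with
  | _ u v =>
    have hsub : {q u, q v} ⊆ univ.image q :=
      insert_subset (mem_image_of_mem q (mem_univ u)) <|
        singleton_subset_iff.mpr (mem_image_of_mem q (mem_univ v))
    have hzero : ∀ i ∈ univ.image q, i ∉ ({q u, q v} : Finset ι) →
        (if inCut (q ⁻¹' {i}) s(u, v) then y else 0) = 0 := by
      intro i _ hi
      simp only [mem_insert, mem_singleton, not_or] at hi
      simp [inCut_mk, Ne.symm hi.1, Ne.symm hi.2]
    rw [← sum_subset hsub hzero]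
    by_cases h : q u = q v
    · simp [h, inCut_mk]
    · rw [sum_pair h]
      simp [inCut_mk, h, Ne.symm h]
      ring

/-- Summing the cut constraints of the classes of `q` counts every edge between two classes
twice. -/
lemma card_image_le_sum_crossing (hx : x ∈ PEC G) {ι : Type*} [DecidableEq ι] (q : V → ι)
    (hq : 2 ≤ #(univ.image q)) :
    (#(univ.image q) : ℝ) ≤
      ∑ e ∈ univ.filter (fun e => e ∈ G.edgeSet ∧ ¬ (e.map q).IsDiag), x e := by
  have hcut : ∀ i ∈ univ.image q, (2 : ℝ) ≤
      ∑ e ∈ univ.filter (· ∈ G.edgeSet), if inCut (q ⁻¹' {i}) e then x e else 0 := by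
    intro i hi
    obtain ⟨v, -, rfl⟩ := mem_image.mp hi
    obtain ⟨j, hj, hjv⟩ := exists_mem_ne hq (q v)
    obtain ⟨u, -, rfl⟩ := mem_image.mp hj
    rw [← sum_filter, filter_filter]
    exact hx.2 _ ⟨v, rfl⟩ fun h => hjv (h ▸ Set.mem_univ u : u ∈ q ⁻¹' {q v})
  have h2 : 2 * (#(univ.image q) : ℝ) ≤
      2 * ∑ e ∈ univ.filter (fun e => e ∈ G.edgeSet ∧ ¬ (e.map q).IsDiag), x e :=
    calc 2 * (#(univ.image q) : ℝ) = ∑ i ∈ univ.image q, 2 := by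
          rw [sum_const, nsmul_eq_mul, mul_comm]
      _ ≤ ∑ i ∈ univ.image q, ∑ e ∈ univ.filter (· ∈ G.edgeSet),
            if inCut (q ⁻¹' {i}) e then x e else 0 := sum_le_sum hcut
      _ = ∑ e ∈ univ.filter (· ∈ G.edgeSet), if (e.map q).IsDiag then 0 else 2 * x e := by
          rw [sum_comm]
          exact sum_congr rfl fun e _ => sum_inCut_fiber q (x e) e
      _ = _ := by
          rw [← filter_filter, sum_filter (s := univ.filter (· ∈ G.edgeSet)), mul_sum]
          exact sum_congr rfl fun e _ => by split_ifs <;> simp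
  linarith

lemma ncard_eq_card_image {w : InflVert G} {P : Set (Set (InflVert G))}
    (hP : IsPartitionOf P {v | v ≠ w}) {q : V → Set (InflVert G)} (hqP : ∀ v, q v ∈ P)
    (hmem : ∀ a : InflVert G, a ≠ w → a ∈ q a.val.1) : P.ncard = #(univ.image q) := by
  have hPq : P = Set.range q := by
    ext B
    refine ⟨fun hB => ?_, fun ⟨v, hv⟩ => hv ▸ hqP v⟩
    obtain ⟨a, ha⟩ := hP.1 B hB
    have haw : a ≠ w := hP.2.1 B hB ha
    exact ⟨a.val.1, (hP.2.2 a haw).unique ⟨hqP _, hmem a haw⟩ ⟨hB, ha⟩⟩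
  rw [hPq, ← Set.ncard_coe_finset, coe_image, coe_univ, Set.image_univ]

/-- With `q v` the block of `P` containing the clique of `v`, every inter-clique edge between
two classes of `q` crosses `P`, except possibly the one at `w`. -/
lemma ncard_sub_one_le_sum_crosses_inflate (hx : x ∈ PEC G)
    (hdeg : ∀ v : V, ∃ a b : InflVert G, a ≠ b ∧ a.val.1 = v ∧ b.val.1 = v)
    {w : InflVert G} {P : Set (Set (InflVert G))} (hP : IsPartitionOf P {v | v ≠ w})
    (hcomp : ∀ B ∈ compPartition (cliqueGraph G) w, ∃ C ∈ P, B ⊆ C) :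
    (P.ncard : ℝ) - 1 ≤
      ∑ f ∈ univ.filter (fun f => f ∈ (Infl G).edgeSet ∧ Crosses P f), inflate G x f := by
  choose q hqP hq using exists_block hdeg hcomp
  have hmem : ∀ a : InflVert G, a ≠ w → a ∈ q a.val.1 := fun a haw => hq _ a rfl haw
  have hx0 : ∀ e ∈ G.edgeSet, 0 ≤ x e := fun e he => (hx.1 e he).1
  rw [ncard_eq_card_image hP hqP hmem]
  rcases Nat.lt_or_ge #(univ.image q) 2 with hk | hk
  · have : (#(univ.image q) : ℝ) ≤ 1 := by exact_mod_cast Nat.lt_succ_iff.mp hk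
    linarith [sum_nonneg fun f
      (hf : f ∈ univ.filter fun f => f ∈ (Infl G).edgeSet ∧ Crosses P f) =>
        inflate_nonneg hx0 (mem_filter.mp hf).2.1]
  set A := univ.filter fun f => f ∈ (Infl G).edgeSet ∧ ¬ (baseEdge f).IsDiag ∧
    ¬ ((baseEdge f).map q).IsDiag
  have hsub : A.erase (interEdge w.2.1) ⊆
      univ.filter fun f => f ∈ (Infl G).edgeSet ∧ Crosses P f := by
    intro f hf
    rw [mem_erase, mem_filter] at hf
    obtain ⟨hfw, -, hfE, hd, hq⟩ := hf
    refine mem_filter.mpr ⟨mem_univ f, hfE, crosses_of_not_isDiag_map hqP hmem ?_ hq⟩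
    exact fun c hc hcw => hfw (hcw ▸ eq_interEdge_of_mem hfE hd hc)
  have hA : ∑ f ∈ A, x (baseEdge f) =
      ∑ e ∈ univ.filter (fun e => e ∈ G.edgeSet ∧ ¬ (e.map q).IsDiag), x e :=
    sum_filter_interClique (fun e => ¬ (e.map q).IsDiag) x
  have hw := sum_le_sum_erase_add A (fun f => x (baseEdge f)) (i := interEdge w.2.1)
    (by rw [baseEdge_interEdge]; exact hx0 _ w.2.1)
  rw [baseEdge_interEdge] at hw
  calc (#(univ.image q) : ℝ) - 1 ≤ ∑ f ∈ A.erase (interEdge w.2.1), x (baseEdge f) := by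
        linarith [card_image_le_sum_crossing hx q hk, (hx.1 _ w.2.1).2]
    _ = ∑ f ∈ A.erase (interEdge w.2.1), inflate G x f :=
        sum_congr rfl fun f hf =>
          (inflate_of_not_isDiag (mem_filter.mp (mem_of_mem_erase hf)).2.2.1).symm
    _ ≤ _ := sum_le_sum_of_subset_of_nonneg hsub fun f hf _ =>
        inflate_nonneg hx0 (mem_filter.mp hf).2.1

lemma inflate_mem_PNC
    (hdeg : ∀ v : V, ∃ a b : InflVert G, a ≠ b ∧ a.val.1 = v ∧ b.val.1 = v)
    (hx : x ∈ PEC G) : inflate G x ∈ PNC G :=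
  ⟨fun _ hf => inflate_mem (s := Set.Icc 0 1) ⟨zero_le_one, le_rfl⟩ hx.1 hf,
    fun _ hne hS => two_le_sum_cut_inflate hx hne hS,
    fun _ _ hP hcomp => ncard_sub_one_le_sum_crosses_inflate hx hdeg hP hcomp⟩

end PartitionConstraints

lemma TwoEdgeConnected.exists_ne_inflVert {G : SimpleGraph V} [Nontrivial V]
    (h : TwoEdgeConnected G) (v : V) :
    ∃ a b : InflVert G, a ≠ b ∧ a.val.1 = v ∧ b.val.1 = v := by
  obtain ⟨u, hu⟩ := h.1.preconnected.exists_adj_of_nontrivial v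
  obtain ⟨u', hu'⟩ := (h.2 s(v, u) hu).preconnected.exists_adj_of_nontrivial v
  rw [SimpleGraph.deleteEdges_adj, Set.mem_singleton_iff] at hu'
  exact ⟨⟨(v, s(v, u)), hu, Sym2.mem_mk_left v u⟩,
    ⟨(v, s(v, u')), hu'.1, Sym2.mem_mk_left v u'⟩,
    fun hab => hu'.2 (congrArg (fun a => a.val.2) hab).symm, rfl, rfl⟩

variable [Fintype V]

lemma setOf_obj_PEC_eq_setOf_obj_PNC {G : SimpleGraph V} {c : Sym2 V → ℝ}
    {c' : Sym2 (InflVert G) → ℝ}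
    (hdeg : ∀ v : V, ∃ a b : InflVert G, a ≠ b ∧ a.val.1 = v ∧ b.val.1 = v)
    (hc' : ∀ f ∈ (Infl G).edgeSet, c' f = if (baseEdge f).IsDiag then 0 else c (baseEdge f))
    {s : Set ℝ} (hs : 1 ∈ s) :
    {t : ℝ | ∃ x ∈ PEC G, (∀ e ∈ G.edgeSet, x e ∈ s) ∧ t = obj G c x}
      = {t : ℝ | ∃ x' ∈ PNC G,
          (∀ f ∈ (Infl G).edgeSet, x' f ∈ s) ∧ t = obj (Infl G) c' x'} := by
  have hsurj : ∀ v : V, ∃ a : InflVert G, a.val.1 = v :=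
    fun v => (hdeg v).imp fun a ⟨_, _, ha, _⟩ => ha
  ext t
  constructor
  · rintro ⟨x, hx, hxs, rfl⟩
    exact ⟨inflate G x, inflate_mem_PNC hdeg hx, fun f hf => inflate_mem hs hxs hf,
      (obj_inflate hc' x).symm⟩
  · rintro ⟨x', hx', hxs, rfl⟩
    exact ⟨deflate G x', deflate_mem_PEC hsurj hx', fun e he => deflate_mem hxs he,
      (obj_deflate hc' x').symm⟩

theorem inflation_preserves_optima_and_integrality_ratio_general
    (G : SimpleGraph V) (hV : 3 ≤ Fintype.card V) (h2ec : TwoEdgeConnected G)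
    (c : Sym2 V → ℝ)
    (c' : Sym2 (InflVert G) → ℝ)
    (hc'cl : ∀ a b : InflVert G, a ≠ b → a.val.1 = b.val.1 → c' s(a, b) = 0)
    (hc'in : ∀ a b : InflVert G, a ≠ b → a.val.2 = b.val.2 → c' s(a, b) = c a.val.2) :
    sInf {t : ℝ | ∃ x ∈ PEC G, t = obj G c x}
        = sInf {t : ℝ | ∃ x' ∈ PNC G, t = obj (Infl G) c' x'} ∧
    sInf {t : ℝ | ∃ x ∈ PEC G, (∀ e ∈ G.edgeSet, x e = 0 ∨ x e = 1) ∧ t = obj G c x}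
        = sInf {t : ℝ | ∃ x' ∈ PNC G,
            (∀ f ∈ (Infl G).edgeSet, x' f = 0 ∨ x' f = 1) ∧ t = obj (Infl G) c' x'} ∧
    sInf {t : ℝ | ∃ x ∈ PEC G, (∀ e ∈ G.edgeSet, x e = 0 ∨ x e = 1) ∧ t = obj G c x} /
        sInf {t : ℝ | ∃ x ∈ PEC G, t = obj G c x}
      = sInf {t : ℝ | ∃ x' ∈ PNC G,
            (∀ f ∈ (Infl G).edgeSet, x' f = 0 ∨ x' f = 1) ∧ t = obj (Infl G) c' x'} /
        sInf {t : ℝ | ∃ x' ∈ PNC G, t = obj (Infl G) c' x'} := by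
  have : Nontrivial V := Fintype.one_lt_card_iff_nontrivial.mp (by omega)
  have hdeg := h2ec.exists_ne_inflVert
  have hc' := fun f (hf : f ∈ (Infl G).edgeSet) => cost_infl hc'cl hc'in hf
  have hfrac : {t : ℝ | ∃ x ∈ PEC G, t = obj G c x}
      = {t : ℝ | ∃ x' ∈ PNC G, t = obj (Infl G) c' x'} := by
    simpa using setOf_obj_PEC_eq_setOf_obj_PNC hdeg hc' (Set.mem_univ 1)
  have hint :
      {t : ℝ | ∃ x ∈ PEC G, (∀ e ∈ G.edgeSet, x e = 0 ∨ x e = 1) ∧ t = obj G c x}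
      = {t : ℝ | ∃ x' ∈ PNC G,
          (∀ f ∈ (Infl G).edgeSet, x' f = 0 ∨ x' f = 1) ∧ t = obj (Infl G) c' x'} :=
    setOf_obj_PEC_eq_setOf_obj_PNC hdeg hc' (s := {0, 1}) (by simp)
  rw [hfrac, hint]
  exact ⟨rfl, rfl, rfl⟩

/-- Let `G` be 2-edge-connected with positive edge costs `c`, and let
`(G', c')` be its inflated instance. Then the optimal value of the cut LP for `(G, c)`
equals the optimal value of the partition LP for `(G', c')`, the minimum cost of an
integral point of `P_EC(G)` equals the minimum cost of an integral point of `P_NC(G')`,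
and consequently the two integrality ratios coincide. -/
theorem inflation_preserves_optima_and_integrality_ratio
    (G : SimpleGraph V) (hV : 3 ≤ Fintype.card V) (h2ec : TwoEdgeConnected G)
    (c : Sym2 V → ℝ) (hc : ∀ e ∈ G.edgeSet, 0 < c e)
    (c' : Sym2 (InflVert G) → ℝ)
    (hc'cl : ∀ a b : InflVert G, a ≠ b → a.val.1 = b.val.1 → c' s(a, b) = 0)
    (hc'in : ∀ a b : InflVert G, a ≠ b → a.val.2 = b.val.2 → c' s(a, b) = c a.val.2) :
    sInf {t : ℝ | ∃ x ∈ PEC G, t = obj G c x}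
        = sInf {t : ℝ | ∃ x' ∈ PNC G, t = obj (Infl G) c' x'} ∧
    sInf {t : ℝ | ∃ x ∈ PEC G, (∀ e ∈ G.edgeSet, x e = 0 ∨ x e = 1) ∧ t = obj G c x}
        = sInf {t : ℝ | ∃ x' ∈ PNC G,
            (∀ f ∈ (Infl G).edgeSet, x' f = 0 ∨ x' f = 1) ∧ t = obj (Infl G) c' x'} ∧
    sInf {t : ℝ | ∃ x ∈ PEC G, (∀ e ∈ G.edgeSet, x e = 0 ∨ x e = 1) ∧ t = obj G c x} /
        sInf {t : ℝ | ∃ x ∈ PEC G, t = obj G c x}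
      = sInf {t : ℝ | ∃ x' ∈ PNC G,
            (∀ f ∈ (Infl G).edgeSet, x' f = 0 ∨ x' f = 1) ∧ t = obj (Infl G) c' x'} /
        sInf {t : ℝ | ∃ x' ∈ PNC G, t = obj (Infl G) c' x'} :=
  inflation_preserves_optima_and_integrality_ratio_general G hV h2ec c c' hc'cl hc'in

end TwoNCTAP
end
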